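/- arXiv:1410.3248 — 4 statements merged into one kernel-verified Lean document; each statement's English description precedes it below -/
import Mathlib

section
/- Let 0 < q ≤ 1 and α > 0. Let J(k,ℓ) ∈ {0,1} for k ∈ [r], ℓ ∈ [s] be random variables such that E[J(k,ℓ)] ≥ αq for all k,ℓ; E[J(k,ℓ)J(k,ℓ')] ≤ q² whenever ℓ ≠ ℓ'; E[J(k,ℓ)J(k',ℓ)] ≤ q² whenever k ≠ k'; and J(k,ℓ) is independent of J(k',ℓ') whenever k ≠ k' and ℓ ≠ ℓ'. Let Z = Σ_{k,ℓ} J(k,ℓ). Then Pr{Z = 0} ≤ 1/(αrsq) + (r+s)/(α²rs). -/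
open Finset

/-!
Second moment method. With `μ = E Z`, on the event `Z = 0` one has `(Z - μ)² = μ²`, so
`Pr{Z = 0} μ² ≤ Var Z`. Expanding `Var Z` as the sum of the covariances of pairs of
indicators, the diagonal contributes at most `E Z`, each of the fewer than `r s (r + s)` pairs
sharing a row or a column at most `q²`, and all other pairs nothing, by independence.
Dividing by `μ² ≥ (α q r s)²` gives the bound.
-/

def expectation {Ω : Type*} [Fintype Ω] (w f : Ω → ℝ) : ℝ := ∑ ω, w ω * f ω

section SecondMoment

variable {Ω : Type*} [Fintype Ω] (w : Ω → ℝ)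

theorem expectation_sum {ι : Type*} [Fintype ι] (X : ι → Ω → ℝ) :
    expectation w (fun ω => ∑ i, X i ω) = ∑ i, expectation w (X i) := by
  simp only [expectation, mul_sum]
  exact sum_comm

theorem expectation_nonneg (hw0 : ∀ ω, 0 ≤ w ω) {f : Ω → ℝ} (hf : ∀ ω, 0 ≤ f ω) :
    0 ≤ expectation w f :=
  sum_nonneg fun ω _ => mul_nonneg (hw0 ω) (hf ω)

theorem expectation_sq_sub_sq (hw1 : ∑ ω, w ω = 1) (Z : Ω → ℝ) :
    expectation w (fun ω => (Z ω - expectation w Z) ^ 2)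
      = expectation w (fun ω => Z ω ^ 2) - expectation w Z ^ 2 := by
  set μ := expectation w Z
  have hexpand : ∀ ω, w ω * (Z ω - μ) ^ 2 = w ω * Z ω ^ 2 - 2 * μ * (w ω * Z ω) + μ ^ 2 * w ω :=
    fun ω => by ring
  simp only [expectation, hexpand, sum_add_distrib, sum_sub_distrib, ← mul_sum, hw1]
  change _ - 2 * μ * μ + μ ^ 2 * 1 = _
  ring

theorem expectation_sq_sum_sub_sq {ι : Type*} [Fintype ι] (X : ι → Ω → ℝ) :
    expectation w (fun ω => (∑ i, X i ω) ^ 2) - expectation w (fun ω => ∑ i, X i ω) ^ 2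
      = ∑ i, ∑ j, (expectation w (fun ω => X i ω * X j ω)
          - expectation w (X i) * expectation w (X j)) := by
  simp only [sq, sum_mul_sum, expectation_sum, sum_sub_distrib]

theorem prob_eq_zero_mul_sq_le (hw0 : ∀ ω, 0 ≤ w ω) (hw1 : ∑ ω, w ω = 1) (Z : Ω → ℝ) :
    (∑ ω ∈ univ.filter (fun ω => Z ω = 0), w ω) * expectation w Z ^ 2
      ≤ expectation w (fun ω => Z ω ^ 2) - expectation w Z ^ 2 := by
  rw [← expectation_sq_sub_sq w hw1, sum_mul]
  calc ∑ ω ∈ univ.filter (fun ω => Z ω = 0), w ω * expectation w Z ^ 2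
      = ∑ ω ∈ univ.filter (fun ω => Z ω = 0), w ω * (Z ω - expectation w Z) ^ 2 :=
        sum_congr rfl fun ω hω => by rw [(mem_filter.mp hω).2]; ring
    _ ≤ _ := sum_le_sum_of_subset_of_nonneg (filter_subset _ _)
        fun ω _ _ => mul_nonneg (hw0 ω) (sq_nonneg _)

theorem prob_eq_zero_le_of_variance_le (hw0 : ∀ ω, 0 ≤ w ω) (hw1 : ∑ ω, w ω = 1)
    (Z : Ω → ℝ) {B : ℝ} (hμ : 0 < expectation w Z)
    (hvar : expectation w (fun ω => Z ω ^ 2) - expectation w Z ^ 2 ≤ expectation w Z + B) :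
    ∑ ω ∈ univ.filter (fun ω => Z ω = 0), w ω
      ≤ 1 / expectation w Z + B / expectation w Z ^ 2 := by
  set μ := expectation w Z
  have hsplit : 1 / μ + B / μ ^ 2 = (μ + B) / μ ^ 2 := by field_simp
  rw [hsplit, le_div_iff₀ (by positivity)]
  exact (prob_eq_zero_mul_sq_le w hw0 hw1 Z).trans hvar

end SecondMoment

section Grid

variable {Ω α β : Type*} [Fintype Ω]

structure IsCoveringGrid (w : Ω → ℝ) (X : α → β → Ω → ℝ) (c : ℝ) : Prop where
  zero_or_one : ∀ k ℓ ω, X k ℓ ω = 0 ∨ X k ℓ ω = 1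
  row : ∀ k ℓ ℓ', ℓ ≠ ℓ' → expectation w (fun ω => X k ℓ ω * X k ℓ' ω) ≤ c
  col : ∀ k k' ℓ, k ≠ k' → expectation w (fun ω => X k ℓ ω * X k' ℓ ω) ≤ c
  indep : ∀ k k' ℓ ℓ', k ≠ k' → ℓ ≠ ℓ' →
    expectation w (fun ω => X k ℓ ω * X k' ℓ' ω) = expectation w (X k ℓ) * expectation w (X k' ℓ')

variable {w : Ω → ℝ} {X : α → β → Ω → ℝ} {c : ℝ}

theorem IsCoveringGrid.covariance_le [DecidableEq α] [DecidableEq β] (hX : IsCoveringGrid w X c)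
    (hw0 : ∀ ω, 0 ≤ w ω) (hc : 0 ≤ c) (p p' : α × β) :
    expectation w (fun ω => X p.1 p.2 ω * X p'.1 p'.2 ω)
        - expectation w (X p.1 p.2) * expectation w (X p'.1 p'.2)
      ≤ (if p = p' then expectation w (X p.1 p.2) else 0)
          + (if p.1 = p'.1 then c else 0) + (if p.2 = p'.2 then c else 0) := by
  obtain ⟨k, ℓ⟩ := p
  obtain ⟨k', ℓ'⟩ := p'
  have hmean_nonneg : ∀ k ℓ, 0 ≤ expectation w (X k ℓ) := fun k ℓ =>
    expectation_nonneg w hw0 fun ω => by rcases hX.zero_or_one k ℓ ω with h | h <;> simp [h]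
  have hprod := mul_nonneg (hmean_nonneg k ℓ) (hmean_nonneg k' ℓ')
  dsimp only
  by_cases hk : k = k' <;> by_cases hℓ : ℓ = ℓ'
  · subst hk hℓ
    have hidem : (fun ω => X k ℓ ω * X k ℓ ω) = X k ℓ :=
      funext fun ω => by rcases hX.zero_or_one k ℓ ω with h | h <;> simp [h]
    simp only [hidem, if_true]
    linarith
  · subst hk
    simp only [Prod.mk.injEq, hℓ, and_false, if_false, if_true]
    linarith [hX.row k ℓ ℓ' hℓ]
  · subst hℓ
    simp only [Prod.mk.injEq, hk, false_and, if_false, if_true]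
    linarith [hX.col k k' ℓ hk]
  · simp only [Prod.mk.injEq, hk, hℓ, and_false, if_false, hX.indep k k' ℓ ℓ' hk hℓ]
    norm_num

variable [Fintype α] [Fintype β]

theorem sum_sum_ite_fst_eq [DecidableEq α] (c : ℝ) :
    ∑ p : α × β, ∑ p' : α × β, (if p.1 = p'.1 then c else 0)
      = Fintype.card α * Fintype.card β ^ 2 * c := by
  simp only [Fintype.sum_prod_type_right, sum_ite_eq, mem_univ, if_true, sum_const, card_univ,
    nsmul_eq_mul, Fintype.card_prod, Nat.cast_mul]
  ring

theorem sum_sum_ite_snd_eq [DecidableEq β] (c : ℝ) :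
    ∑ p : α × β, ∑ p' : α × β, (if p.2 = p'.2 then c else 0)
      = Fintype.card α ^ 2 * Fintype.card β * c := by
  simp only [Fintype.sum_prod_type, sum_ite_eq, mem_univ, if_true, sum_const, card_univ,
    nsmul_eq_mul, Fintype.card_prod, Nat.cast_mul]
  ring

theorem IsCoveringGrid.variance_le (hX : IsCoveringGrid w X c) (hw0 : ∀ ω, 0 ≤ w ω)
    (hc : 0 ≤ c) :
    expectation w (fun ω => (∑ k, ∑ ℓ, X k ℓ ω) ^ 2) - expectation w (fun ω => ∑ k, ∑ ℓ, X k ℓ ω) ^ 2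
      ≤ expectation w (fun ω => ∑ k, ∑ ℓ, X k ℓ ω)
          + c * (Fintype.card α * Fintype.card β * (Fintype.card α + Fintype.card β)) := by
  classical
  simp only [← Fintype.sum_prod_type']
  rw [expectation_sq_sum_sub_sq, expectation_sum]
  calc _ ≤ ∑ p : α × β, ∑ p' : α × β, ((if p = p' then expectation w (X p.1 p.2) else 0)
          + (if p.1 = p'.1 then c else 0) + (if p.2 = p'.2 then c else 0)) :=
        sum_le_sum fun p _ => sum_le_sum fun p' _ => hX.covariance_le hw0 hc p p'
    _ = _ := by
      simp only [sum_add_distrib, sum_ite_eq, mem_univ, if_true, sum_sum_ite_fst_eq,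
        sum_sum_ite_snd_eq]
      ring

end Grid

theorem mutual_covering_lemma_general
    {Ω : Type*} [Fintype Ω] (w : Ω → ℝ)
    (hw0 : ∀ ω, 0 ≤ w ω) (hw1 : ∑ ω, w ω = 1)
    (r s : ℕ) (hr : 0 < r) (hs : 0 < s)
    (q α : ℝ) (hq0 : 0 < q) (hα : 0 < α)
    (J : Fin r → Fin s → Ω → ℝ)
    (hJ01 : ∀ k ℓ ω, J k ℓ ω = 0 ∨ J k ℓ ω = 1)
    (hmean : ∀ k ℓ, α * q ≤ ∑ ω, w ω * J k ℓ ω)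
    (hrow : ∀ k ℓ ℓ', ℓ ≠ ℓ' → ∑ ω, w ω * (J k ℓ ω * J k ℓ' ω) ≤ q ^ 2)
    (hcol : ∀ k k' ℓ, k ≠ k' → ∑ ω, w ω * (J k ℓ ω * J k' ℓ ω) ≤ q ^ 2)
    (hind : ∀ k k' ℓ ℓ', k ≠ k' → ℓ ≠ ℓ' →
      ∑ ω, w ω * (J k ℓ ω * J k' ℓ' ω)
        = (∑ ω, w ω * J k ℓ ω) * (∑ ω, w ω * J k' ℓ' ω)) :
    ∑ ω ∈ univ.filter (fun ω => (∑ k, ∑ ℓ, J k ℓ ω) = 0), w ω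
      ≤ 1 / (α * r * s * q) + (r + s) / (α ^ 2 * r * s) := by
  have hJ : IsCoveringGrid w J (q ^ 2) := ⟨hJ01, hrow, hcol, hind⟩
  have hμ : α * r * s * q ≤ expectation w (fun ω => ∑ k, ∑ ℓ, J k ℓ ω) := by
    simp only [expectation_sum]
    calc α * r * s * q = ∑ _k : Fin r, ∑ _ℓ : Fin s, α * q := by simp; ring
      _ ≤ _ := sum_le_sum fun k _ => sum_le_sum fun ℓ _ => hmean k ℓ
  have hvar := hJ.variance_le hw0 (sq_nonneg q)
  simp only [Fintype.card_fin] at hvar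
  calc _ ≤ _ := prob_eq_zero_le_of_variance_le w hw0 hw1 _ (hμ.trans_lt' (by positivity)) hvar
    _ ≤ 1 / (α * r * s * q) + q ^ 2 * (r * s * (r + s)) / (α * r * s * q) ^ 2 := by gcongr
    _ = _ := by field_simp

/-- One-shot mutual covering lemma: on a finite probability space `(Ω, w)`,
`0/1`-valued random variables `J k ℓ` with mean at least `α q`, pairwise
second moments at most `q²` along shared rows/columns, and independence
across distinct rows and columns, satisfy
`Pr{∑ J = 0} ≤ 1/(α r s q) + (r+s)/(α² r s)`. -/
theorem mutual_covering_lemma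
    {Ω : Type*} [Fintype Ω] (w : Ω → ℝ)
    (hw0 : ∀ ω, 0 ≤ w ω) (hw1 : ∑ ω, w ω = 1)
    (r s : ℕ) (hr : 0 < r) (hs : 0 < s)
    (q α : ℝ) (hq0 : 0 < q) (hq1 : q ≤ 1) (hα : 0 < α)
    (J : Fin r → Fin s → Ω → ℝ)
    (hJ01 : ∀ k ℓ ω, J k ℓ ω = 0 ∨ J k ℓ ω = 1)
    (hmean : ∀ k ℓ, α * q ≤ ∑ ω, w ω * J k ℓ ω)
    (hrow : ∀ k ℓ ℓ', ℓ ≠ ℓ' → ∑ ω, w ω * (J k ℓ ω * J k ℓ' ω) ≤ q ^ 2)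
    (hcol : ∀ k k' ℓ, k ≠ k' → ∑ ω, w ω * (J k ℓ ω * J k' ℓ ω) ≤ q ^ 2)
    (hind : ∀ k k' ℓ ℓ', k ≠ k' → ℓ ≠ ℓ' →
      ∑ ω, w ω * (J k ℓ ω * J k' ℓ' ω)
        = (∑ ω, w ω * J k ℓ ω) * (∑ ω, w ω * J k' ℓ' ω)) :
    ∑ ω ∈ univ.filter (fun ω => (∑ k, ∑ ℓ, J k ℓ ω) = 0), w ω
      ≤ 1 / (α * r * s * q) + (r + s) / (α ^ 2 * r * s) :=
  mutual_covering_lemma_general w hw0 hw1 r s hr hs q α hq0 hα J hJ01 hmean hrow hcol hind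
end

section
/- Let real numbers R₁, R₂, I₀^B, I₀^C, I_∞ and ε̃ ∈ (0, 1/40] satisfy I_∞ > −1, R₁ ≤ I₀^B − 5 log₂(1/ε̃) − 2, R₂ ≤ I₀^C − 5 log₂(1/ε̃) − 2, and R₁ + R₂ ≤ I₀^B + I₀^C − I_∞ − 11 log₂(1/ε̃) − 5, with R₁, R₂ ≥ 0. Then there exist positive integers r₁, r₂ such that: R₁ + r₁ ≤ I₀^B − 4 log₂(1/ε̃) − 1; R₂ + r₂ ≤ I₀^C − 4 log₂(1/ε̃) − 1; r₁, r₂ ≥ log₂(1/ε̃); and r₁ + r₂ = ⌈I_∞ + 3 log₂(1/ε̃)⌉. -/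
/-- Existence of band-size parameters `r₁, r₂`: under the rate constraints of
the one-shot Marton bound (with `ε̃ ∈ (0, 1/40]` and `I_∞ > -1`), there exist
positive integers `r₁, r₂` with `R₁ + r₁ ≤ I₀^B - 4 log₂(1/ε̃) - 1`,
`R₂ + r₂ ≤ I₀^C - 4 log₂(1/ε̃) - 1`, `r₁, r₂ ≥ log₂(1/ε̃)` and
`r₁ + r₂ = ⌈I_∞ + 3 log₂(1/ε̃)⌉`. -/
theorem exists_band_sizes
    (R1 R2 I0B I0C Iinf teps : ℝ)
    (hteps0 : 0 < teps) (hteps1 : teps ≤ 1 / 40)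
    (hIinf : -1 < Iinf) (hR1 : 0 ≤ R1) (hR2 : 0 ≤ R2)
    (h1 : R1 ≤ I0B - 5 * Real.logb 2 (1 / teps) - 2)
    (h2 : R2 ≤ I0C - 5 * Real.logb 2 (1 / teps) - 2)
    (h3 : R1 + R2 ≤ I0B + I0C - Iinf - 11 * Real.logb 2 (1 / teps) - 5) :
    ∃ r1 r2 : ℕ, 0 < r1 ∧ 0 < r2 ∧
      R1 + r1 ≤ I0B - 4 * Real.logb 2 (1 / teps) - 1 ∧
      R2 + r2 ≤ I0C - 4 * Real.logb 2 (1 / teps) - 1 ∧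
      Real.logb 2 (1 / teps) ≤ (r1 : ℝ) ∧
      Real.logb 2 (1 / teps) ≤ (r2 : ℝ) ∧
      ((r1 : ℤ) + (r2 : ℤ) = ⌈Iinf + 3 * Real.logb 2 (1 / teps)⌉) := by
  set L := Real.logb 2 (1 / teps) with hLdef
  -- 1/teps ≥ 40
  have h40 : (40 : ℝ) ≤ 1 / teps := by
    rw [le_div_iff₀ hteps0]
    nlinarith
  have hL5 : (5 : ℝ) ≤ L := by
    have h32 : (2 : ℝ) ^ (5 : ℝ) ≤ 1 / teps := by
      have : ((2 : ℝ) ^ (5 : ℝ)) = 32 := by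
        rw [show (5 : ℝ) = ((5 : ℕ) : ℝ) by norm_num, Real.rpow_natCast]
        norm_num
      linarith
    have := (Real.le_logb_iff_rpow_le (by norm_num : (1:ℝ) < 2)
      (by linarith : (0:ℝ) < 1 / teps)).2 h32
    exact this
  set a : ℤ := ⌈L⌉ with hadef
  set S : ℤ := ⌈Iinf + 3 * L⌉ with hSdef
  set cap1 : ℝ := I0B - 4 * L - 1 - R1 with hcap1
  set cap2 : ℝ := I0C - 4 * L - 1 - R2 with hcap2
  set c1 : ℤ := ⌊cap1⌋ with hc1def
  set c2 : ℤ := ⌊cap2⌋ with hc2def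
  have haL : L ≤ (a : ℝ) := Int.le_ceil L
  have haL1 : (a : ℝ) < L + 1 := Int.ceil_lt_add_one L
  have hSge : Iinf + 3 * L ≤ (S : ℝ) := Int.le_ceil _
  have hSlt : (S : ℝ) < Iinf + 3 * L + 1 := Int.ceil_lt_add_one _
  have hc1le : (c1 : ℝ) ≤ cap1 := Int.floor_le _
  have hc2le : (c2 : ℝ) ≤ cap2 := Int.floor_le _
  have hc1gt : cap1 - 1 < (c1 : ℝ) := Int.sub_one_lt_floor _
  have hc2gt : cap2 - 1 < (c2 : ℝ) := Int.sub_one_lt_floor _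
  -- a ≤ c1, a ≤ c2
  have hac1 : a ≤ c1 := Int.le_floor.2 (by simp only [hcap1]; linarith)
  have hac2 : a ≤ c2 := Int.le_floor.2 (by simp only [hcap2]; linarith)
  -- S ≤ c1 + c2
  have hSc : S ≤ c1 + c2 := by
    have h : (S : ℝ) ≤ ((c1 + c2 : ℤ) : ℝ) := by
      push_cast
      simp only [hcap1, hcap2] at hc1gt hc2gt
      linarith
    exact_mod_cast h
  -- 2a ≤ S
  have h2a : 2 * a < S := by
    have : (2 * a : ℝ) < (S : ℝ) := by push_cast; linarith
    exact_mod_cast this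
  set m1 : ℤ := min c1 (S - a) with hm1def
  set m2 : ℤ := S - m1 with hm2def
  have ham1 : a ≤ m1 := le_min hac1 (by omega)
  have hm1c1 : m1 ≤ c1 := min_le_left _ _
  have ham2 : a ≤ m2 := by
    rcases min_cases c1 (S - a) with ⟨h, _⟩ | ⟨h, _⟩ <;> omega
  have hm2c2 : m2 ≤ c2 := by
    rcases min_cases c1 (S - a) with ⟨h, _⟩ | ⟨h, _⟩ <;> omega
  have ha5 : (5 : ℤ) ≤ a := by
    have : (5 : ℝ) ≤ (a : ℝ) := le_trans hL5 haL
    exact_mod_cast this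
  have hm1pos : 0 < m1 := by omega
  have hm2pos : 0 < m2 := by omega
  refine ⟨m1.toNat, m2.toNat, by omega, by omega, ?_, ?_, ?_, ?_, ?_⟩
  · have : ((m1.toNat : ℤ) : ℝ) ≤ cap1 := by
      calc ((m1.toNat : ℤ) : ℝ) = (m1 : ℝ) := by rw [Int.toNat_of_nonneg hm1pos.le]
        _ ≤ (c1 : ℝ) := by exact_mod_cast hm1c1
        _ ≤ cap1 := hc1le
    push_cast at this ⊢
    simp only [hcap1] at this
    linarith
  · have : ((m2.toNat : ℤ) : ℝ) ≤ cap2 := by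
      calc ((m2.toNat : ℤ) : ℝ) = (m2 : ℝ) := by rw [Int.toNat_of_nonneg hm2pos.le]
        _ ≤ (c2 : ℝ) := by exact_mod_cast hm2c2
        _ ≤ cap2 := hc2le
    push_cast at this ⊢
    simp only [hcap2] at this
    linarith
  · have : (a : ℝ) ≤ ((m1.toNat : ℤ) : ℝ) := by
      exact_mod_cast (by omega : a ≤ (m1.toNat : ℤ))
    push_cast at this ⊢
    linarith
  · have : (a : ℝ) ≤ ((m2.toNat : ℤ) : ℝ) := by
      exact_mod_cast (by omega : a ≤ (m2.toNat : ℤ))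
    push_cast at this ⊢
    linarith
  · omega
end

section
/- For finite classical random variables (U,V) with n-fold iid copies (Uⁿ,Vⁿ), and any ε ∈ (0,1): lim_{n→∞} (1/n) I_∞^ε[Uⁿ;Vⁿ] = I[U;V], where I[U;V] is the Shannon mutual information. -/
open Finset

/-- The n-fold iid product of a joint pmf `p` on `U × V`. -/
noncomputable def iidJoint {U V : Type*} (p : U × V → ℝ) (n : ℕ) :
    (Fin n → U) × (Fin n → V) → ℝ :=
  fun x => ∏ i, p (x.1 i, x.2 i)

/-- The smooth max Rényi divergence `I_∞^ε`, expressed as the infimum of all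
exponents `λ` admitting a set `𝒢` with `p(𝒢) > 1 - ε` on which
`p(u,v) ≤ 2^λ p_U(u) p_V(v)` (with `p_U, p_V` the marginals of `p`). -/
noncomputable def ImaxSmooth {U V : Type*} [Fintype U] [Fintype V]
    (p : U × V → ℝ) (ε : ℝ) : ℝ :=
  sInf {lam : ℝ | ∃ G : Finset (U × V),
    1 - ε < ∑ x ∈ G, p x ∧
    ∀ x ∈ G, p x ≤ (2 : ℝ) ^ lam * ((∑ v, p (x.1, v)) * (∑ u, p (u, x.2)))}

open Filter Topology MeasureTheory ProbabilityTheory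

/-!
Off the null set of `pⁿ`, the `n`-fold density factors as `2 ^ Tₙ` times the product of the
marginals, where `Tₙ = ∑ᵢ log₂ (p / p_U p_V) (Uᵢ, Vᵢ)` is a sum of `n` iid copies of the
information density, of mean `I[U;V]`. By Chebyshev's inequality `|Tₙ - n I| < n δ` off a set of
mass `O(1/n)`, eventually below `min ε (1 - ε)`. Removing that set gives an admissible `𝒢` for
`λ = n (I + δ)`; conversely every admissible `𝒢` has mass `> 1 - ε` and so meets the concentration
set, where the density exceeds `2 ^ (n (I - δ))` times the product of the marginals, forcing
`λ ≥ n (I - δ)`.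
-/

theorem measureReal_abs_sum_sub_ge_le {S : Type*} [MeasurableSpace S] (μ : Measure S)
    [IsProbabilityMeasure μ] {f : S → ℝ} (hf : MemLp f 2 μ) (n : ℕ) {t : ℝ} (ht : 0 < t) :
    (Measure.pi fun _ : Fin n => μ).real {ω | t ≤ |∑ i, f (ω i) - n * μ[f]|}
      ≤ n * Var[f; μ] / t ^ 2 := by
  set ν := Measure.pi fun _ : Fin n => μ
  have hmem (i : Fin n) : MemLp (fun ω : Fin n → S => f (ω i)) 2 ν :=
    hf.comp_measurePreserving (measurePreserving_eval _ i)
  have hmean : ν[fun ω : Fin n → S => ∑ i, f (ω i)] = (n : ℝ) * μ[f] := by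
    rw [integral_finsetSum _ fun i _ => (hmem i).integrable one_le_two, sum_congr rfl fun i _ =>
      integral_comp_eval (μ := fun _ : Fin n => μ) (i := i) hf.aestronglyMeasurable]
    simp
  have hvar : Var[fun ω : Fin n → S => ∑ i, f (ω i); ν] = n * Var[f; μ] := by
    have := IndepFun.variance_sum (s := univ) (fun i _ => hmem i)
      fun i _ j _ hij => (iIndepFun_pi fun _ => hf.aemeasurable).indepFun hij
    simp only [sum_fn] at this
    rw [this, sum_congr rfl fun i _ =>
      (measurePreserving_eval (fun _ : Fin n => μ) i).variance_fun_comp hf.aemeasurable]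
    simp
  have hcheb := meas_ge_le_variance_div_sq (memLp_finsetSum univ fun i _ => hmem i) ht
  rw [hmean, hvar] at hcheb
  exact ENNReal.toReal_le_of_le_ofReal
    (div_nonneg (mul_nonneg n.cast_nonneg (variance_nonneg _ _)) (sq_nonneg _)) hcheb

theorem tendsto_sum_prod_filter_abs_sub_ge {S : Type*} [Fintype S] (w f : S → ℝ)
    (hw0 : ∀ s, 0 ≤ w s) (hw1 : ∑ s, w s = 1) {δ : ℝ} (hδ : 0 < δ) :
    Tendsto (fun n : ℕ => ∑ ω : Fin n → S with n * δ ≤ |∑ i, f (ω i) - n * ∑ s, w s * f s|,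
      ∏ i, w (ω i)) atTop (𝓝 0) := by
  let _ : MeasurableSpace S := ⊤
  have hw1' : ∑ s, ENNReal.ofReal (w s) = 1 := by
    rw [← ENNReal.ofReal_sum_of_nonneg fun s _ => hw0 s, hw1, ENNReal.ofReal_one]
  set μ := (PMF.ofFintype _ hw1').toMeasure
  have hμ (s : S) : μ.real {s} = w s := by
    rw [measureReal_def, PMF.toMeasure_apply_singleton _ _ (measurableSet_singleton s),
      PMF.ofFintype_apply, ENNReal.toReal_ofReal (hw0 s)]
  have hmean : μ[f] = ∑ s, w s * f s := by
    simp [μ, PMF.integral_eq_sum, hw0]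
  have hmass (n : ℕ) (B : Finset (Fin n → S)) :
      ∑ ω ∈ B, ∏ i, w (ω i) = (Measure.pi fun _ : Fin n => μ).real B := by
    rw [← sum_measureReal_singleton]
    refine sum_congr rfl fun ω _ => ?_
    simp [measureReal_def, ENNReal.toReal_prod, ← hμ]
  have hbound : ∀ᶠ n : ℕ in atTop,
      ∑ ω : Fin n → S with n * δ ≤ |∑ i, f (ω i) - n * ∑ s, w s * f s|, ∏ i, w (ω i)
        ≤ Var[f; μ] / δ ^ 2 * (n : ℝ)⁻¹ := by
    filter_upwards [eventually_gt_atTop 0] with n hn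
    rw [hmass, coe_filter_univ, ← hmean]
    refine (measureReal_abs_sum_sub_ge_le μ MemLp.of_discrete n (by positivity)).trans_eq ?_
    field_simp
  refine tendsto_of_tendsto_of_tendsto_of_le_of_le' tendsto_const_nhds ?_
    (Eventually.of_forall fun n => sum_nonneg fun ω _ => prod_nonneg fun i _ => hw0 _) hbound
  simpa using (tendsto_inv_atTop_zero.comp tendsto_natCast_atTop_atTop).const_mul
    (Var[f; μ] / δ ^ 2)

theorem two_rpow_mul_le_two_rpow_mul_iff {a b c : ℝ} (h : 0 < 2 ^ a * c) :
    2 ^ a * c ≤ 2 ^ b * c ↔ a ≤ b := by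
  rw [mul_le_mul_iff_of_pos_right (pos_of_mul_pos_right h (by positivity)),
    Real.rpow_le_rpow_left_iff one_lt_two]

section SmoothMaxDiv

variable {X : Type*} [Fintype X] {P Q T : X → ℝ} {ε μ t lam : ℝ}

def IsSmoothMaxDivBound (P Q : X → ℝ) (ε lam : ℝ) : Prop :=
  ∃ G : Finset X, 1 - ε < ∑ x ∈ G, P x ∧ ∀ x ∈ G, P x ≤ 2 ^ lam * Q x

noncomputable def smoothMaxDiv (P Q : X → ℝ) (ε : ℝ) : ℝ :=
  sInf {lam | IsSmoothMaxDivBound P Q ε lam}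

theorem sum_le_sum_filter_of_pos_imp (hP : ∀ x, 0 ≤ P x) {G : Finset X} {B : X → Prop}
    [DecidablePred B] (h : ∀ x ∈ G, 0 < P x → B x) :
    ∑ x ∈ G, P x ≤ ∑ x with B x, P x := by
  rw [← sum_filter_of_ne fun x hx hPx => h x hx ((hP x).lt_of_ne' hPx)]
  exact sum_le_sum_of_subset_of_nonneg (fun x hx => by simp_all) fun x _ _ => hP x

theorem isSmoothMaxDivBound_add_of_tail_lt (hP0 : ∀ x, 0 ≤ P x) (hP1 : ∑ x, P x = 1)
    (hT : ∀ x, 0 < P x → P x = 2 ^ T x * Q x)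
    (htail : ∑ x with t ≤ |T x - μ|, P x < ε) :
    IsSmoothMaxDivBound P Q ε (μ + t) := by
  classical
  refine ⟨({x | P x ≤ 2 ^ (μ + t) * Q x} : Finset X), ?_, fun x hx => (mem_filter.1 hx).2⟩
  have hbad : ∑ x with ¬P x ≤ 2 ^ (μ + t) * Q x, P x ≤ ∑ x with t ≤ |T x - μ|, P x := by
    refine sum_le_sum_filter_of_pos_imp hP0 fun x hx hPx => ?_
    have hlt := not_le.1 (mem_filter.1 hx).2
    rw [hT x hPx] at hlt
    have hTx := not_le.1 ((two_rpow_mul_le_two_rpow_mul_iff (hT x hPx ▸ hPx)).not.1 hlt.not_ge)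
    exact le_abs.2 (Or.inl (by linarith))
  linarith [sum_filter_add_sum_filter_not univ (fun x => P x ≤ 2 ^ (μ + t) * Q x) P]

theorem sub_le_of_isSmoothMaxDivBound (hP0 : ∀ x, 0 ≤ P x)
    (hT : ∀ x, 0 < P x → P x = 2 ^ T x * Q x)
    (htail : ∑ x with t ≤ |T x - μ|, P x ≤ 1 - ε) (h : IsSmoothMaxDivBound P Q ε lam) :
    μ - t ≤ lam := by
  obtain ⟨G, hGmass, hGbound⟩ := h
  by_contra! hlam
  have hGtail : ∑ x ∈ G, P x ≤ ∑ x with t ≤ |T x - μ|, P x := by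
    refine sum_le_sum_filter_of_pos_imp hP0 fun x hx hPx => ?_
    have hle := hGbound x hx
    rw [hT x hPx] at hle
    have hTx := (two_rpow_mul_le_two_rpow_mul_iff (hT x hPx ▸ hPx)).1 hle
    exact le_abs.2 (Or.inr (by linarith))
  linarith

theorem abs_smoothMaxDiv_sub_le (hP0 : ∀ x, 0 ≤ P x) (hP1 : ∑ x, P x = 1)
    (hT : ∀ x, 0 < P x → P x = 2 ^ T x * Q x)
    (htail : ∑ x with t ≤ |T x - μ|, P x < min ε (1 - ε)) :
    |smoothMaxDiv P Q ε - μ| ≤ t := by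
  have hupper :=
    isSmoothMaxDivBound_add_of_tail_lt hP0 hP1 hT (htail.trans_le (min_le_left _ _))
  have hlower (lam) (h : IsSmoothMaxDivBound P Q ε lam) :=
    sub_le_of_isSmoothMaxDivBound hP0 hT (htail.le.trans (min_le_right _ _)) h
  rw [abs_sub_le_iff, sub_le_iff_le_add', sub_le_comm]
  exact ⟨csInf_le ⟨μ - t, hlower⟩ hupper, le_csInf ⟨μ + t, hupper⟩ hlower⟩

end SmoothMaxDiv

section Iid

variable {U V : Type*}

theorem marginals_mul_pos [Fintype U] [Fintype V] {p : U × V → ℝ} (hp0 : ∀ x, 0 ≤ p x)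
    {s : U × V} (hs : 0 < p s) :
    0 < (∑ v, p (s.1, v)) * (∑ u, p (u, s.2)) :=
  mul_pos
    (hs.trans_le (single_le_sum (f := fun v => p (s.1, v)) (fun _ _ => hp0 _) (mem_univ _)))
    (hs.trans_le (single_le_sum (f := fun u => p (u, s.2)) (fun _ _ => hp0 _) (mem_univ _)))

theorem sum_iidJoint [Fintype U] [Fintype V] (p : U × V → ℝ) (n : ℕ) :
    ∑ x, iidJoint p n x = (∑ s, p s) ^ n := by
  rw [← (Equiv.arrowProdEquivProdArrow (Fin n) _ _).sum_comp, ← Fin.prod_const,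
    Fintype.prod_sum fun _ s => p s]
  rfl

theorem iidJoint_marginals [Fintype U] [Fintype V] (p : U × V → ℝ) (n : ℕ)
    (x : (Fin n → U) × (Fin n → V)) :
    (∑ v, iidJoint p n (x.1, v)) * (∑ u, iidJoint p n (u, x.2))
      = ∏ i, (∑ b, p (x.1 i, b)) * (∑ a, p (a, x.2 i)) := by
  rw [prod_mul_distrib, Fintype.prod_sum fun i b => p (x.1 i, b),
    Fintype.prod_sum fun i a => p (a, x.2 i)]
  rfl

theorem iidJoint_eq_two_rpow_sum_mul {p q f : U × V → ℝ} (hp0 : ∀ x, 0 ≤ p x)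
    (hpq : ∀ s, 0 < p s → p s = 2 ^ f s * q s) {n : ℕ} {x : (Fin n → U) × (Fin n → V)}
    (hx : 0 < iidJoint p n x) :
    iidJoint p n x = 2 ^ (∑ i, f (x.1 i, x.2 i)) * ∏ i, q (x.1 i, x.2 i) := by
  have hpos (i : Fin n) : 0 < p (x.1 i, x.2 i) :=
    (hp0 _).lt_of_ne' fun h => hx.ne' (prod_eq_zero (mem_univ i) h)
  rw [Real.rpow_sum_of_pos two_pos, ← prod_mul_distrib]
  exact prod_congr rfl fun i _ => hpq _ (hpos i)

theorem tendsto_sum_iidJoint_filter_abs_sub_ge [Fintype U] [Fintype V] (p f : U × V → ℝ)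
    (hp0 : ∀ x, 0 ≤ p x) (hp1 : ∑ x, p x = 1) {δ : ℝ} (hδ : 0 < δ) :
    Tendsto (fun n : ℕ => ∑ x : (Fin n → U) × (Fin n → V)
        with n * δ ≤ |∑ i, f (x.1 i, x.2 i) - n * ∑ s, p s * f s|, iidJoint p n x)
      atTop (𝓝 0) := by
  refine (tendsto_sum_prod_filter_abs_sub_ge p f hp0 hp1 hδ).congr fun n => ?_
  rw [sum_filter, sum_filter, ← (Equiv.arrowProdEquivProdArrow (Fin n) _ _).sum_comp]
  rfl

end Iid

/-- Asymptotic iid convergence of the smooth max Rényi divergence to the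
Shannon mutual information: `(1/n) I_∞^ε[Uⁿ;Vⁿ] → I[U;V]` for any `ε ∈ (0,1)`. -/
theorem smooth_max_renyi_div_iid_limit
    {U V : Type*} [Fintype U] [Fintype V]
    (p : U × V → ℝ) (hp0 : ∀ x, 0 ≤ p x) (hp1 : ∑ x, p x = 1)
    (ε : ℝ) (hε0 : 0 < ε) (hε1 : ε < 1) :
    Filter.Tendsto (fun n : ℕ => ImaxSmooth (iidJoint p n) ε / n)
      Filter.atTop
      (nhds (∑ x : U × V, p x *
        Real.logb 2 (p x / ((∑ v, p (x.1, v)) * (∑ u, p (u, x.2)))))) := by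
  set q : U × V → ℝ := fun s => (∑ v, p (s.1, v)) * (∑ u, p (u, s.2))
  set f : U × V → ℝ := fun s => Real.logb 2 (p s / q s)
  have hpq (s : U × V) (hs : 0 < p s) : p s = 2 ^ f s * q s := by
    rw [Real.rpow_logb two_pos one_lt_two.ne' (div_pos hs (marginals_mul_pos hp0 hs)),
      div_mul_cancel₀ _ (marginals_mul_pos hp0 hs).ne']
  refine Metric.tendsto_nhds.2 fun δ hδ => ?_
  have htail := (tendsto_sum_iidJoint_filter_abs_sub_ge p f hp0 hp1 (half_pos hδ)).eventually
    (gt_mem_nhds (lt_min hε0 (sub_pos.2 hε1)))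
  filter_upwards [htail, eventually_gt_atTop 0] with n hn hn0
  have hconc := abs_smoothMaxDiv_sub_le (P := iidJoint p n)
    (Q := fun x => ∏ i, q (x.1 i, x.2 i)) (T := fun x => ∑ i, f (x.1 i, x.2 i))
    (fun x => prod_nonneg fun i _ => hp0 _) (by rw [sum_iidJoint, hp1, one_pow])
    (fun x hx => iidJoint_eq_two_rpow_sum_mul hp0 hpq hx) hn
  have hImax : ImaxSmooth (iidJoint p n) ε
      = smoothMaxDiv (iidJoint p n) (fun x => ∏ i, q (x.1 i, x.2 i)) ε := by
    simp only [ImaxSmooth, smoothMaxDiv, IsSmoothMaxDivBound, iidJoint_marginals]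
    rfl
  have hn0' : (0 : ℝ) < n := Nat.cast_pos.2 hn0
  rw [Real.dist_eq, hImax, ← mul_div_cancel_left₀ (∑ s, p s * f s) hn0'.ne', ← sub_div,
    abs_div, abs_of_pos hn0', div_lt_iff₀ hn0']
  linarith [mul_pos hn0' hδ]
end

section
/- For finite random variables (U,V) with n-fold iid copies, and any ε > 0 and λ > I[U;V] (Shannon mutual information), for all sufficiently large n: (1/n) I_∞^ε[Uⁿ;Vⁿ] ≤ λ. -/
set_option linter.unusedSectionVars false
set_option maxHeartbeats 1000000

open Finset

section Aux
variable {α : Type*} [Fintype α]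

lemma sum_pi_prod {n : ℕ} (g : Fin n → α → ℝ) :
    ∑ ω : Fin n → α, ∏ i, g i (ω i) = ∏ i, ∑ a, g i a := by
  classical
  rw [← Fintype.piFinset_univ, Finset.sum_prod_piFinset]

lemma exp_coord (w : α → ℝ) (hw1 : ∑ a, w a = 1) {n : ℕ} (k : Fin n) (g : α → ℝ) :
    ∑ ω : Fin n → α, (∏ i, w (ω i)) * g (ω k) = ∑ a, w a * g a := by
  classical
  have h : ∀ ω : Fin n → α, (∏ i, w (ω i)) * g (ω k)
      = ∏ i, (w (ω i) * if i = k then g (ω i) else 1) := by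
    intro ω
    rw [Finset.prod_mul_distrib]
    congr 1
    simp
  have hs : (∑ ω : Fin n → α, ∏ i, (w (ω i) * if i = k then g (ω i) else 1))
      = ∏ i, ∑ a, (w a * if i = k then g a else 1) :=
    sum_pi_prod (fun i a => w a * if i = k then g a else 1)
  rw [Finset.sum_congr rfl (fun ω _ => h ω), hs]
  have h2 : ∀ i : Fin n, (∑ a, (w a * if i = k then g a else 1))
      = if i = k then ∑ a, w a * g a else 1 := by
    intro i
    by_cases hik : i = k <;> simp [hik, hw1]
  rw [Finset.prod_congr rfl (fun i _ => h2 i)]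
  simp

lemma exp_coord2 (w : α → ℝ) (hw1 : ∑ a, w a = 1) {n : ℕ} {k l : Fin n} (hkl : k ≠ l)
    (g h : α → ℝ) :
    ∑ ω : Fin n → α, (∏ i, w (ω i)) * (g (ω k) * h (ω l))
      = (∑ a, w a * g a) * (∑ a, w a * h a) := by
  classical
  have key : ∀ ω : Fin n → α, (∏ i, w (ω i)) * (g (ω k) * h (ω l))
      = ∏ i, (w (ω i) * ((if i = k then g (ω i) else 1) * (if i = l then h (ω i) else 1))) := by
    intro ω
    rw [Finset.prod_mul_distrib, Finset.prod_mul_distrib]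
    simp
  have hs : (∑ ω : Fin n → α, ∏ i,
        (w (ω i) * ((if i = k then g (ω i) else 1) * (if i = l then h (ω i) else 1))))
      = ∏ i, ∑ a, (w a * ((if i = k then g a else 1) * (if i = l then h a else 1))) :=
    sum_pi_prod (fun i a => w a * ((if i = k then g a else 1) * (if i = l then h a else 1)))
  rw [Finset.sum_congr rfl (fun ω _ => key ω), hs]
  have h2 : ∀ i : Fin n,
      (∑ a, w a * ((if i = k then g a else 1) * (if i = l then h a else 1)))
      = (if i = k then (∑ a, w a * g a) else 1) * (if i = l then (∑ a, w a * h a) else 1) := by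
    intro i
    by_cases hik : i = k
    · subst hik
      simp [hkl, hw1]
    · by_cases hil : i = l
      · subst hil
        simp [hik, hw1]
      · simp [hik, hil, hw1]
  rw [Finset.prod_congr rfl (fun i _ => h2 i), Finset.prod_mul_distrib]
  simp

lemma second_moment (w : α → ℝ) (hw1 : ∑ a, w a = 1) (g : α → ℝ)
    (hg : ∑ a, w a * g a = 0) (n : ℕ) :
    ∑ ω : Fin n → α, (∏ i, w (ω i)) * (∑ i, g (ω i)) ^ 2
      = n * ∑ a, w a * (g a) ^ 2 := by
  classical
  have expand : ∀ ω : Fin n → α, (∏ i, w (ω i)) * (∑ i, g (ω i)) ^ 2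
      = ∑ k : Fin n, ∑ l : Fin n, (∏ i, w (ω i)) * (g (ω k) * g (ω l)) := by
    intro ω
    rw [sq, Finset.sum_mul_sum, Finset.mul_sum]
    exact Finset.sum_congr rfl fun k _ => by rw [Finset.mul_sum]
  rw [Finset.sum_congr rfl (fun ω _ => expand ω)]
  rw [Finset.sum_comm]
  have h3 : ∀ k : Fin n, ∑ ω : Fin n → α, ∑ l : Fin n, (∏ i, w (ω i)) * (g (ω k) * g (ω l))
      = ∑ l : Fin n, ∑ ω : Fin n → α, (∏ i, w (ω i)) * (g (ω k) * g (ω l)) :=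
    fun k => Finset.sum_comm
  rw [Finset.sum_congr rfl (fun k _ => h3 k)]
  have inner : ∀ k l : Fin n,
      (∑ ω : Fin n → α, (∏ i, w (ω i)) * (g (ω k) * g (ω l)))
      = if k = l then (∑ a, w a * (g a) ^ 2) else 0 := by
    intro k l
    by_cases hkl : k = l
    · subst hkl
      rw [if_pos rfl, ← exp_coord w hw1 k (fun a => (g a) ^ 2)]
      exact Finset.sum_congr rfl fun ω _ => by rw [sq]
    · rw [if_neg hkl, exp_coord2 w hw1 hkl g g, hg, mul_zero]
  rw [Finset.sum_congr rfl (fun k _ => Finset.sum_congr rfl (fun l _ => inner k l))]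
  simp [Finset.sum_ite_eq, mul_comm]

lemma tail_bound (w : α → ℝ) (hw0 : ∀ a, 0 ≤ w a) (hw1 : ∑ a, w a = 1) (g : α → ℝ)
    (hg : ∑ a, w a * g a = 0) (n : ℕ) (c : ℝ) (hc : 0 < c) :
    ∑ ω ∈ Finset.univ.filter (fun ω : Fin n → α => c ≤ ∑ i, g (ω i)), (∏ i, w (ω i))
      ≤ (n * ∑ a, w a * (g a) ^ 2) / c ^ 2 := by
  classical
  have step1 : ∑ ω ∈ Finset.univ.filter (fun ω : Fin n → α => c ≤ ∑ i, g (ω i)), (∏ i, w (ω i))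
      ≤ ∑ ω ∈ Finset.univ.filter (fun ω : Fin n → α => c ≤ ∑ i, g (ω i)),
          (∏ i, w (ω i)) * ((∑ i, g (ω i)) ^ 2 / c ^ 2) := by
    refine Finset.sum_le_sum fun ω hω => ?_
    have hωc : c ≤ ∑ i, g (ω i) := (Finset.mem_filter.mp hω).2
    have hW : 0 ≤ ∏ i, w (ω i) := Finset.prod_nonneg fun i _ => hw0 _
    have h1 : (1 : ℝ) ≤ (∑ i, g (ω i)) ^ 2 / c ^ 2 := by
      rw [one_le_div (by positivity)]
      exact pow_le_pow_left₀ hc.le hωc 2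
    calc (∏ i, w (ω i)) = (∏ i, w (ω i)) * 1 := (mul_one _).symm
      _ ≤ (∏ i, w (ω i)) * ((∑ i, g (ω i)) ^ 2 / c ^ 2) :=
          mul_le_mul_of_nonneg_left h1 hW
  have step2 : ∑ ω ∈ Finset.univ.filter (fun ω : Fin n → α => c ≤ ∑ i, g (ω i)),
          (∏ i, w (ω i)) * ((∑ i, g (ω i)) ^ 2 / c ^ 2)
      ≤ ∑ ω : Fin n → α, (∏ i, w (ω i)) * ((∑ i, g (ω i)) ^ 2 / c ^ 2) := by
    refine Finset.sum_le_sum_of_subset_of_nonneg (Finset.filter_subset _ _) fun ω _ _ => ?_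
    have hW : 0 ≤ ∏ i, w (ω i) := Finset.prod_nonneg fun i _ => hw0 _
    positivity
  refine step1.trans (step2.trans ?_)
  have heq : ∑ ω : Fin n → α, (∏ i, w (ω i)) * ((∑ i, g (ω i)) ^ 2 / c ^ 2)
      = (∑ ω : Fin n → α, (∏ i, w (ω i)) * (∑ i, g (ω i)) ^ 2) / c ^ 2 := by
    rw [Finset.sum_div]
    exact Finset.sum_congr rfl fun ω _ => (mul_div_assoc _ _ _).symm
  rw [heq, second_moment w hw1 g hg n]

end Aux

section Domain
variable {U V : Type*} [Fintype U] [Fintype V]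

lemma iid_marginal_fst (p : U × V → ℝ) (n : ℕ) (a : Fin n → U) :
    ∑ b : Fin n → V, iidJoint p n (a, b) = ∏ i, ∑ v, p (a i, v) := by
  simpa [iidJoint] using sum_pi_prod (fun i (v : V) => p (a i, v))

lemma iid_marginal_snd (p : U × V → ℝ) (n : ℕ) (b : Fin n → V) :
    ∑ a : Fin n → U, iidJoint p n (a, b) = ∏ i, ∑ u, p (u, b i) := by
  simpa [iidJoint] using sum_pi_prod (fun i (u : U) => p (u, b i))

lemma iid_total (p : U × V → ℝ) (hp1 : ∑ x, p x = 1) (n : ℕ) :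
    ∑ x : (Fin n → U) × (Fin n → V), iidJoint p n x = 1 := by
  rw [Fintype.sum_prod_type]
  have h1 : ∀ a : Fin n → U, ∑ b : Fin n → V, iidJoint p n (a, b) = ∏ i, ∑ v, p (a i, v) :=
    iid_marginal_fst p n
  rw [Finset.sum_congr rfl (fun a _ => h1 a)]
  have hs : (∑ a : Fin n → U, ∏ i, ∑ v, p (a i, v)) = ∏ i : Fin n, ∑ u, ∑ v, p (u, v) :=
    sum_pi_prod (fun _ u => ∑ v, p (u, v))
  rw [hs]
  have : (∑ u, ∑ v, p (u, v)) = 1 := by rw [← Fintype.sum_prod_type]; exact hp1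
  simp [this]

lemma marg_fst_pos (p : U × V → ℝ) (hp0 : ∀ x, 0 ≤ p x) {x : U × V} (hx : 0 < p x) :
    0 < ∑ v, p (x.1, v) :=
  lt_of_lt_of_le hx (Finset.single_le_sum (fun v _ => hp0 (x.1, v)) (mem_univ x.2))

lemma marg_snd_pos (p : U × V → ℝ) (hp0 : ∀ x, 0 ≤ p x) {x : U × V} (hx : 0 < p x) :
    0 < ∑ u, p (u, x.2) :=
  lt_of_lt_of_le hx (Finset.single_le_sum (fun u _ => hp0 (u, x.2)) (mem_univ x.1))

lemma gibbs (p : U × V → ℝ) (hp0 : ∀ x, 0 ≤ p x) (hp1 : ∑ x, p x = 1) :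
    0 ≤ ∑ x : U × V, p x *
      Real.logb 2 (p x / ((∑ v, p (x.1, v)) * (∑ u, p (u, x.2)))) := by
  set q : U × V → ℝ := fun x => (∑ v, p (x.1, v)) * (∑ u, p (u, x.2)) with hq
  have hq0 : ∀ x, 0 ≤ q x := fun x =>
    mul_nonneg (Finset.sum_nonneg fun v _ => hp0 _) (Finset.sum_nonneg fun u _ => hp0 _)
  have hqsum : ∑ x : U × V, q x = 1 := by
    have h1 : (∑ u, ∑ v, p (u, v)) = 1 := by rw [← Fintype.sum_prod_type]; exact hp1
    have h2 : (∑ v, ∑ u, p (u, v)) = 1 := by rw [← Fintype.sum_prod_type_right]; exact hp1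
    calc ∑ x : U × V, q x
        = ∑ u, ∑ v, (∑ v', p (u, v')) * (∑ u', p (u', v)) := Fintype.sum_prod_type _
      _ = (∑ u, ∑ v', p (u, v')) * (∑ v, ∑ u', p (u', v)) := by
          rw [← Finset.sum_mul_sum]
      _ = 1 := by rw [h1, h2, one_mul]
  have key : ∀ x : U × V, (p x - q x) / Real.log 2 ≤ p x * Real.logb 2 (p x / q x) := by
    intro x
    rcases eq_or_lt_of_le (hp0 x) with h0 | hpx
    · rw [← h0]
      simp only [zero_mul, sub_eq_add_neg, zero_add]
      apply div_nonpos_of_nonpos_of_nonneg (by linarith [hq0 x]) (Real.log_nonneg one_le_two)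
    · have hqx : 0 < q x := mul_pos (marg_fst_pos p hp0 hpx) (marg_snd_pos p hp0 hpx)
      have hlog : Real.log (q x / p x) ≤ q x / p x - 1 :=
        Real.log_le_sub_one_of_pos (div_pos hqx hpx)
      have hld : Real.log (p x / q x) = - Real.log (q x / p x) := by
        rw [Real.log_div hpx.ne' hqx.ne', Real.log_div hqx.ne' hpx.ne']; ring
      have h1 : 1 - q x / p x ≤ Real.log (p x / q x) := by rw [hld]; linarith
      have h2 : p x - q x ≤ p x * Real.log (p x / q x) := by
        have := mul_le_mul_of_nonneg_left h1 hpx.le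
        have hpq : p x * (1 - q x / p x) = p x - q x := by field_simp
        linarith [hpq ▸ this]
      rw [Real.logb, ← mul_div_assoc, div_le_div_iff_of_pos_right (Real.log_pos one_lt_two)]
      exact h2
  calc (0 : ℝ) = (∑ x : U × V, (p x - q x)) / Real.log 2 := by
        rw [Finset.sum_sub_distrib, hp1, hqsum, sub_self, zero_div]
    _ = ∑ x : U × V, (p x - q x) / Real.log 2 := by rw [Finset.sum_div]
    _ ≤ ∑ x : U × V, p x * Real.logb 2 (p x / q x) := Finset.sum_le_sum fun x _ => key x

end Domain

/-- The canonical equivalence between functions to a product and pairs of functions. -/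
def pairEquiv (U V : Type*) (n : ℕ) : (Fin n → U × V) ≃ ((Fin n → U) × (Fin n → V)) where
  toFun ω := (fun i => (ω i).1, fun i => (ω i).2)
  invFun x := fun i => (x.1 i, x.2 i)
  left_inv ω := rfl
  right_inv x := rfl

/-- Eventual upper bound on the normalized smooth max Rényi divergence of iid
copies: for any `ε > 0` and any `λ` greater than the Shannon mutual
information `I[U;V]`, for all sufficiently large `n`,
`(1/n) I_∞^ε[Uⁿ;Vⁿ] ≤ λ`. -/
theorem smooth_max_renyi_div_iid_eventually_le
    {U V : Type*} [Fintype U] [Fintype V]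
    (p : U × V → ℝ) (hp0 : ∀ x, 0 ≤ p x) (hp1 : ∑ x, p x = 1)
    (ε lam : ℝ) (hε : 0 < ε)
    (hlam : (∑ x : U × V, p x *
      Real.logb 2 (p x / ((∑ v, p (x.1, v)) * (∑ u, p (u, x.2))))) < lam) :
    ∀ᶠ n : ℕ in Filter.atTop, ImaxSmooth (iidJoint p n) ε / n ≤ lam := by
  classical
  set F : U × V → ℝ :=
    fun x => Real.logb 2 (p x / ((∑ v, p (x.1, v)) * (∑ u, p (u, x.2)))) with hF
  have hμlam : (∑ x : U × V, p x * F x) < lam := by simpa [hF] using hlam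
  have hμ0 : 0 ≤ ∑ x : U × V, p x * F x := gibbs p hp0 hp1
  set μ : ℝ := ∑ x : U × V, p x * F x with hμ
  set δ : ℝ := lam - μ with hδdef
  have hδ : 0 < δ := sub_pos.mpr hμlam
  set g : U × V → ℝ := fun x => F x - μ with hgdef
  have hEg : ∑ x : U × V, p x * g x = 0 := by
    have h : ∑ x : U × V, p x * g x
        = (∑ x : U × V, p x * F x) - (∑ x : U × V, p x) * μ := by
      simp only [hgdef, mul_sub]
      rw [Finset.sum_sub_distrib, Finset.sum_mul]
    rw [h, hp1, one_mul, ← hμ, sub_self]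
  set σ2 : ℝ := ∑ x : U × V, p x * (g x) ^ 2 with hσ2def
  have hσ2 : 0 ≤ σ2 := Finset.sum_nonneg fun x _ => mul_nonneg (hp0 x) (sq_nonneg _)
  rw [Filter.eventually_atTop]
  refine ⟨⌊σ2 / (ε * δ ^ 2)⌋₊ + 1, fun n hn => ?_⟩
  have hn1 : 1 ≤ n := le_trans (Nat.le_add_left 1 _) hn
  have hnpos : (0 : ℝ) < n := by exact_mod_cast hn1
  have hnbig : σ2 / (ε * δ ^ 2) < (n : ℝ) := by
    calc σ2 / (ε * δ ^ 2) < ((⌊σ2 / (ε * δ ^ 2)⌋₊ + 1 : ℕ) : ℝ) := by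
          push_cast
          exact Nat.lt_floor_add_one _
      _ ≤ (n : ℝ) := by exact_mod_cast hn
  have htail : σ2 / ((n : ℝ) * δ ^ 2) < ε := by
    rw [div_lt_iff₀ (by positivity)]
    have h := (div_lt_iff₀ (by positivity : (0:ℝ) < ε * δ ^ 2)).mp hnbig
    calc σ2 < (n : ℝ) * (ε * δ ^ 2) := h
      _ = ε * ((n : ℝ) * δ ^ 2) := by ring
  set e : (Fin n → U × V) ≃ ((Fin n → U) × (Fin n → V)) := pairEquiv U V n with he
  set q : (Fin n → U) × (Fin n → V) → ℝ := iidJoint p n with hqdef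
  set P : (Fin n → U) × (Fin n → V) → Prop :=
    fun x => q x ≤ (2 : ℝ) ^ (lam * (n : ℝ)) *
      ((∑ b, q (x.1, b)) * (∑ a, q (a, x.2))) with hP
  have key : ∀ ω : Fin n → U × V, ¬ P (e ω) → (n : ℝ) * δ ≤ ∑ i, g (ω i) := by
    intro ω hω
    have h1 : (∑ b, q ((e ω).1, b)) = ∏ i, ∑ v, p ((ω i).1, v) := by
      rw [hqdef, iid_marginal_fst]
      rfl
    have h2 : (∑ a, q (a, (e ω).2)) = ∏ i, ∑ u, p (u, (ω i).2) := by
      rw [hqdef, iid_marginal_snd]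
      rfl
    have h3 : q (e ω) = ∏ i, p (ω i) := rfl
    simp only [hP] at hω
    rw [h1, h2, h3] at hω
    push_neg at hω
    set R : ℝ := (∏ i, ∑ v, p ((ω i).1, v)) * (∏ i, ∑ u, p (u, (ω i).2)) with hR
    have hR0 : 0 ≤ R :=
      mul_nonneg (Finset.prod_nonneg fun i _ => Finset.sum_nonneg fun v _ => hp0 _)
        (Finset.prod_nonneg fun i _ => Finset.sum_nonneg fun u _ => hp0 _)
    have hq0 : 0 < ∏ i, p (ω i) :=
      lt_of_le_of_lt (mul_nonneg (Real.rpow_nonneg (by norm_num) _) hR0) hω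
    have hpi : ∀ i, 0 < p (ω i) := by
      intro i
      rcases (hp0 (ω i)).lt_or_eq with h | h
      · exact h
      · exact absurd (Finset.prod_eq_zero (mem_univ i) h.symm) hq0.ne'
    have hUi : ∀ i, 0 < ∑ v, p ((ω i).1, v) := fun i => marg_fst_pos p hp0 (hpi i)
    have hVi : ∀ i, 0 < ∑ u, p (u, (ω i).2) := fun i => marg_snd_pos p hp0 (hpi i)
    have hRpos : 0 < R :=
      mul_pos (Finset.prod_pos fun i _ => hUi i) (Finset.prod_pos fun i _ => hVi i)
    have hlt : (2 : ℝ) ^ (lam * (n : ℝ)) < (∏ i, p (ω i)) / R := (lt_div_iff₀ hRpos).mpr hω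
    have hlog : lam * (n : ℝ) < Real.logb 2 ((∏ i, p (ω i)) / R) := by
      have h := Real.logb_lt_logb (b := 2) one_lt_two
        (Real.rpow_pos_of_pos two_pos _) hlt
      rwa [Real.logb_rpow two_pos (by norm_num)] at h
    have hprod : (∏ i, p (ω i)) / R
        = ∏ i, (p (ω i) / ((∑ v, p ((ω i).1, v)) * (∑ u, p (u, (ω i).2)))) := by
      rw [hR, ← Finset.prod_mul_distrib, ← Finset.prod_div_distrib]
    have hsum : Real.logb 2 ((∏ i, p (ω i)) / R) = ∑ i, F (ω i) := by
      rw [hprod, Real.logb_prod _ _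
        (fun i _ => (div_pos (hpi i) (mul_pos (hUi i) (hVi i))).ne')]
    have hFsum : lam * (n : ℝ) < ∑ i, F (ω i) := hsum ▸ hlog
    have hgs : ∑ i, g (ω i) = (∑ i, F (ω i)) - (n : ℝ) * μ := by
      simp only [hgdef]
      rw [Finset.sum_sub_distrib, Finset.sum_const, Finset.card_univ, Fintype.card_fin,
        nsmul_eq_mul]
    rw [hgs]
    have hδn : (n : ℝ) * δ = lam * (n : ℝ) - (n : ℝ) * μ := by rw [hδdef]; ring
    linarith
  have hbad : ∑ x ∈ univ.filter (fun x => ¬ P x), q x ≤ σ2 / ((n : ℝ) * δ ^ 2) := by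
    have htrans : ∑ x ∈ univ.filter (fun x => ¬ P x), q x
        = ∑ ω ∈ univ.filter (fun ω : Fin n → U × V => ¬ P (e ω)), ∏ i, p (ω i) := by
      rw [Finset.sum_filter, Finset.sum_filter]
      refine (Fintype.sum_equiv e (fun ω => if ¬ P (e ω) then ∏ i, p (ω i) else 0)
        (fun x => if ¬ P x then q x else 0) (fun ω => ?_)).symm
      have hqe : q (e ω) = ∏ i, p (ω i) := rfl
      simp only [hqe]
    rw [htrans]
    have hsub : univ.filter (fun ω : Fin n → U × V => ¬ P (e ω))
        ⊆ univ.filter (fun ω : Fin n → U × V => (n : ℝ) * δ ≤ ∑ i, g (ω i)) := by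
      intro ω hω
      rw [Finset.mem_filter] at hω ⊢
      exact ⟨hω.1, key ω hω.2⟩
    have h1 : (∑ ω ∈ univ.filter (fun ω : Fin n → U × V => ¬ P (e ω)), ∏ i, p (ω i))
        ≤ ∑ ω ∈ univ.filter (fun ω : Fin n → U × V => (n : ℝ) * δ ≤ ∑ i, g (ω i)),
            ∏ i, p (ω i) :=
      Finset.sum_le_sum_of_subset_of_nonneg hsub
        (fun ω _ _ => Finset.prod_nonneg fun i _ => hp0 _)
    have h2 := tail_bound p hp0 hp1 g hEg n ((n : ℝ) * δ) (by positivity)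
    have h3 : ((n : ℝ) * ∑ a : U × V, p a * (g a) ^ 2) / ((n : ℝ) * δ) ^ 2
        = σ2 / ((n : ℝ) * δ ^ 2) := by
      rw [← hσ2def]
      field_simp
    rw [h3] at h2
    exact h1.trans h2
  have htot : ∑ x : (Fin n → U) × (Fin n → V), q x = 1 := iid_total p hp1 n
  have hmass : 1 - ε < ∑ x ∈ univ.filter P, q x := by
    have hsplit := Finset.sum_filter_add_sum_filter_not univ P q
    have hlt := lt_of_le_of_lt hbad htail
    rw [htot] at hsplit
    linarith
  rw [div_le_iff₀ hnpos]
  have hmem : lam * (n : ℝ) ∈ {lam' : ℝ | ∃ G : Finset ((Fin n → U) × (Fin n → V)),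
      1 - ε < ∑ x ∈ G, iidJoint p n x ∧
      ∀ x ∈ G, iidJoint p n x ≤ (2 : ℝ) ^ lam' *
        ((∑ v, iidJoint p n (x.1, v)) * (∑ u, iidJoint p n (u, x.2)))} := by
    refine ⟨univ.filter P, hmass, fun x hx => ?_⟩
    exact (Finset.mem_filter.mp hx).2
  unfold ImaxSmooth
  by_cases hbdd : BddBelow {lam' : ℝ | ∃ G : Finset ((Fin n → U) × (Fin n → V)),
      1 - ε < ∑ x ∈ G, iidJoint p n x ∧
      ∀ x ∈ G, iidJoint p n x ≤ (2 : ℝ) ^ lam' *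
        ((∑ v, iidJoint p n (x.1, v)) * (∑ u, iidJoint p n (u, x.2)))}
  · exact csInf_le hbdd hmem
  · rw [csInf_of_not_bddBelow hbdd, Real.sInf_empty]
    exact mul_nonneg (le_trans hμ0 hμlam.le) (Nat.cast_nonneg n)
end
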